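/- Let N ≥ 2 be an integer, A := (N²/(N−1))^{N−1}, and ℓ > 0. Suppose φ : [0,1] → ℝ is nonnegative, continuous on [0,1], twice continuously differentiable on (0,1], satisfies N ξ φ″(ξ) + φ(ξ)^{1/(N−1)} φ′(ξ) = 0 for all ξ ∈ (0,1), φ(0) = 0 and φ(1) = ℓ. Then ℓ < A, and there exists a unique λ > 0 with W_λ(1) = ℓ, and φ(ξ) = W_λ(ξ) for all ξ ∈ [0,1]. -/

import Mathlib

/-!
Expanding the derivative shows that `N ξ φ'' + φ^{1/(N-1)} φ'` is the derivative of
`E = N ξ φ' - N φ + ((N-1)/N) φ^{N/(N-1)}`, so `E` is constant on `(0,1)`. Near `0` this gives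
`ξ φ' → E/N`; a nonzero limit would make `φ` behave like `(E/N) log ξ`, which is incompatible
with `φ(0+) = 0`. Hence `E = 0` and `φ` solves the Bernoulli equation
`ξ φ' = φ - ((N-1)/N²) φ^{N/(N-1)}`, which is linear in `φ^{-1/(N-1)}`: with `r = 1/(N-1)` and
`B = N²/(N-1)`, the quantity `ξ^r (B φ^{-r} - 1)` is constant wherever `φ > 0`, i.e.
`φ^r (c + ξ^r) = B ξ^r`. Applied beyond the last zero of `φ` and extended by continuity, this
forces that zero to be `0` and `c > 0`, and the identity says exactly `φ = W_λ` with
`λ^N = c^{1-N}`. Finally `W_λ(1) = (B t/(1+t))^{N-1}` with `t = λ^{N/(N-1)}` is strictly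
increasing in `λ` and stays below `B^{N-1} = A`.
-/

open Set

/-- The stationary profile `W_λ(ξ) = A λ^N ξ (1+(λ^N ξ)^{1/(N−1)})^{1−N}`,
where `A = (N²/(N−1))^(N−1)`. -/
noncomputable def Wprof (N : ℕ) (lam ξ : ℝ) : ℝ :=
  ((N : ℝ) ^ 2 / ((N : ℝ) - 1)) ^ (N - 1) * lam ^ N * ξ *
    (1 + (lam ^ N * ξ) ^ ((1 : ℝ) / ((N : ℝ) - 1))) ^ ((1 : ℝ) - N)

open Filter Topology

theorem exists_eq_const_of_hasDerivAt_zero {f : ℝ → ℝ} {a b : ℝ}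
    (hf : ∀ x ∈ Ioo a b, HasDerivAt f 0 x) : ∃ c, ∀ x ∈ Ioo a b, f x = c :=
  isOpen_Ioo.exists_is_const_of_deriv_eq_zero isPreconnected_Ioo
    (fun x hx => (hf x hx).differentiableAt.differentiableWithinAt)
    (fun x hx => (hf x hx).deriv)

theorem hasDerivAt_deriv_of_contDiffOn_two {f : ℝ → ℝ} {s : Set ℝ} {x : ℝ} (hs : IsOpen s)
    (hf : ContDiffOn ℝ 2 f s) (hx : x ∈ s) :
    HasDerivAt f (deriv f x) x ∧ HasDerivAt (deriv f) (deriv (deriv f) x) x :=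
  ⟨((hf.differentiableOn (by norm_num)).differentiableAt (hs.mem_nhds hx)).hasDerivAt,
    (((hf.deriv_of_isOpen hs (by norm_num : (1 : WithTop ℕ∞) + 1 ≤ 2)).differentiableOn
      one_ne_zero).differentiableAt (hs.mem_nhds hx)).hasDerivAt⟩

theorem ContinuousOn.exists_last_zero {f : ℝ → ℝ} {a b : ℝ} (hf : ContinuousOn f (Icc a b))
    (hab : a ≤ b) (ha : f a = 0) :
    ∃ c ∈ Icc a b, f c = 0 ∧ ∀ x ∈ Ioc c b, f x ≠ 0 := by
  have hclosed : IsClosed (Icc a b ∩ f ⁻¹' {0}) :=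
    hf.preimage_isClosed_of_isClosed isClosed_Icc isClosed_singleton
  obtain ⟨c, ⟨hc, hfc⟩, hmax⟩ := (isCompact_Icc.of_isClosed_subset hclosed
    inter_subset_left).exists_isGreatest ⟨a, left_mem_Icc.2 hab, ha⟩
  refine ⟨c, hc, hfc, fun x hx hfx => hx.1.not_ge (hmax ⟨?_, hfx⟩)⟩
  exact ⟨hc.1.trans hx.1.le, hx.2⟩

theorem tendsto_atBot_of_le_mul_deriv {f f' : ℝ → ℝ} {k δ : ℝ} (hk : 0 < k) (hδ : 0 < δ)
    (hf : ∀ x ∈ Ioo 0 δ, HasDerivAt f (f' x) x) (hle : ∀ x ∈ Ioo 0 δ, k ≤ x * f' x) :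
    Tendsto f (𝓝[>] 0) atBot := by
  set g := fun x => f x - k * Real.log x
  have hg' : ∀ x ∈ Ioo 0 δ, HasDerivAt g (f' x - k * x⁻¹) x := fun x hx =>
    (hf x hx).sub ((Real.hasDerivAt_log hx.1.ne').const_mul k)
  have hg : MonotoneOn g (Ioo 0 δ) := by
    refine monotoneOn_of_hasDerivWithinAt_nonneg (convex_Ioo 0 δ)
      (fun x hx => (hg' x hx).continuousAt.continuousWithinAt)
      (fun x hx => (hg' x (interior_subset hx)).hasDerivWithinAt) fun x hx => ?_
    rw [interior_Ioo] at hx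
    have := hle x hx
    rw [sub_nonneg, ← div_eq_mul_inv, div_le_iff₀' hx.1]
    exact this
  have hδ2 : δ / 2 ∈ Ioo 0 δ := ⟨half_pos hδ, half_lt_self hδ⟩
  have hlog : Tendsto (fun x => g (δ / 2) + k * Real.log x) (𝓝[>] 0) atBot :=
    tendsto_atBot_add_const_left _ _ (Real.tendsto_log_nhdsGT_zero.const_mul_atBot hk)
  refine tendsto_atBot_mono' _ ?_ hlog
  filter_upwards [Ioo_mem_nhdsGT hδ2.1] with x hx
  have := hg ⟨hx.1, hx.2.trans hδ2.2⟩ hδ2 hx.2.le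
  simp only [g] at this ⊢
  linarith

theorem eq_zero_of_tendsto_mul_deriv {f f' : ℝ → ℝ} {L k : ℝ}
    (hf : ∀ᶠ x in 𝓝[>] 0, HasDerivAt f (f' x) x) (hL : Tendsto f (𝓝[>] 0) (𝓝 L))
    (hk : Tendsto (fun x => x * f' x) (𝓝[>] 0) (𝓝 k)) : k = 0 := by
  wlog hk_pos : 0 < k generalizing f f' L k
  · rcases (not_lt.1 hk_pos).lt_or_eq with hk_neg | rfl
    · have := this (f := -f) (f' := -f') (L := -L) (k := -k)
        (hf.mono fun x hx => hx.neg) hL.neg (by simpa using hk.neg) (neg_pos.2 hk_neg)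
      linarith
    · rfl
  obtain ⟨δ, hδ, hδsub⟩ := mem_nhdsGT_iff_exists_Ioo_subset.1
    (hf.and (hk.eventually (lt_mem_nhds (half_lt_self hk_pos))))
  exact absurd hL <| not_tendsto_nhds_of_tendsto_atBot (tendsto_atBot_of_le_mul_deriv
    (half_pos hk_pos) hδ (fun x hx => (hδsub hx).1) fun x hx => (hδsub hx).2.le) L

noncomputable def firstIntegral (n : ℝ) (φ φ' : ℝ → ℝ) (x : ℝ) : ℝ :=
  n * x * φ' x - n * φ x + (n - 1) / n * φ x ^ (n / (n - 1))

noncomputable def bernoulliIntegral (n : ℝ) (φ : ℝ → ℝ) (x : ℝ) : ℝ :=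
  x ^ (1 / (n - 1)) * (n ^ 2 / (n - 1) * φ x ^ (-(1 / (n - 1))) - 1)

theorem hasDerivAt_firstIntegral {n ξ φ'' : ℝ} {φ φ' : ℝ → ℝ} (hn : 1 < n)
    (hφ : HasDerivAt φ (φ' ξ) ξ) (hφ' : HasDerivAt φ' φ'' ξ) :
    HasDerivAt (firstIntegral n φ φ') (n * ξ * φ'' + φ ξ ^ (1 / (n - 1)) * φ' ξ) ξ := by
  have hn1 : n - 1 ≠ 0 := sub_ne_zero.2 hn.ne'
  have hn0 : n ≠ 0 := by positivity
  have hp : 1 ≤ n / (n - 1) := by rw [le_div_iff₀ (sub_pos.2 hn)]; linarith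
  have hpow := (Real.hasDerivAt_rpow_const (Or.inr hp)).comp ξ hφ
  refine ((((hasDerivAt_id ξ).const_mul n).mul hφ').sub (hφ.const_mul n)).add
    (hpow.const_mul ((n - 1) / n)) |>.congr_deriv ?_
  rw [show n / (n - 1) - 1 = 1 / (n - 1) by field_simp; ring]
  simp only [id]
  field_simp
  ring

theorem mul_deriv_eq_of_ode {n b : ℝ} {φ φ' φ'' : ℝ → ℝ} (hn : 1 < n)
    (hφ : ∀ ξ ∈ Ioo 0 b, HasDerivAt φ (φ' ξ) ξ) (hφ' : ∀ ξ ∈ Ioo 0 b, HasDerivAt φ' (φ'' ξ) ξ)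
    (hode : ∀ ξ ∈ Ioo 0 b, n * ξ * φ'' ξ + φ ξ ^ (1 / (n - 1)) * φ' ξ = 0)
    (h0 : Tendsto φ (𝓝[>] 0) (𝓝 0)) :
    ∀ ξ ∈ Ioo 0 b, n * ξ * φ' ξ = n * φ ξ - (n - 1) / n * φ ξ ^ (n / (n - 1)) := by
  intro ξ hξ
  have hn0 : n ≠ 0 := by positivity
  obtain ⟨k, hk⟩ := exists_eq_const_of_hasDerivAt_zero fun x hx =>
    hode x hx ▸ hasDerivAt_firstIntegral hn (hφ x hx) (hφ' x hx)
  have hIoo : Ioo 0 b ∈ 𝓝[>] (0 : ℝ) := Ioo_mem_nhdsGT (hξ.1.trans hξ.2)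
  have hlim : Tendsto (fun x => x * φ' x) (𝓝[>] 0) (𝓝 (k / n)) := by
    have hp : 0 < n / (n - 1) := div_pos (by linarith) (by linarith)
    have := (((tendsto_const_nhds (x := k)).add (h0.const_mul n)).sub
      ((h0.rpow_const (Or.inr hp.le)).const_mul ((n - 1) / n))).div_const n
    rw [Real.zero_rpow hp.ne'] at this
    refine (this.congr' ?_).trans (by simp)
    filter_upwards [hIoo] with x hx
    rw [← hk x hx, firstIntegral]
    field_simp
    ring
  have hk0 : k = 0 := by
    simpa [hn0] using eq_zero_of_tendsto_mul_deriv (eventually_of_mem hIoo hφ) h0 hlim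
  have := hk ξ hξ
  rw [hk0, firstIntegral] at this
  linarith

theorem hasDerivAt_bernoulliIntegral {n ξ d : ℝ} {φ : ℝ → ℝ} (hn : 1 < n) (hξ : 0 < ξ)
    (hφξ : 0 < φ ξ) (hφ : HasDerivAt φ d ξ)
    (hfirst : n * ξ * d = n * φ ξ - (n - 1) / n * φ ξ ^ (n / (n - 1))) :
    HasDerivAt (bernoulliIntegral n φ) 0 ξ := by
  set r := 1 / (n - 1)
  set B := n ^ 2 / (n - 1)
  have hn1 : n - 1 ≠ 0 := sub_ne_zero.2 hn.ne'
  have hn0 : n ≠ 0 := by positivity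
  have hp : n / (n - 1) = r + 1 := by simp only [r]; field_simp; ring
  have hB : B * ((n - 1) / n ^ 2) = 1 := by simp only [B]; field_simp
  have hφr : φ ξ ^ (-r) = φ ξ ^ (-r - 1) * φ ξ := by
    rw [← Real.rpow_add_one hφξ.ne']; ring_nf
  have hφp : φ ξ ^ (-r - 1) * φ ξ ^ (r + 1) = 1 := by
    rw [← Real.rpow_add hφξ]; simp
  have hξr : ξ ^ r = ξ ^ (r - 1) * ξ := by
    rw [← Real.rpow_add_one hξ.ne']; ring_nf
  have hpow := (Real.hasDerivAt_rpow_const (p := -r) (Or.inl hφξ.ne')).comp ξ hφ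
  refine ((Real.hasDerivAt_rpow_const (p := r) (Or.inl hξ.ne')).mul
    ((hpow.const_mul B).sub_const 1)).congr_deriv ?_
  have hξd : ξ * d = φ ξ - (n - 1) / n ^ 2 * φ ξ ^ (r + 1) := by
    rw [← hp]
    field_simp at hfirst ⊢
    linear_combination hfirst
  clear_value r B
  simp only [Function.comp_apply]
  -- the derivative is `r ξ^(r-1) φ^(-r-1) (B (φ - ξ d) - φ^(r+1))`
  linear_combination (r * ξ ^ (r - 1) * B) * hφr + (-r * B * φ ξ ^ (-r - 1) * d) * hξr
    + (-r * ξ ^ (r - 1) * B * φ ξ ^ (-r - 1)) * hξd + (r * ξ ^ (r - 1)) * hφp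
    + (r * ξ ^ (r - 1) * φ ξ ^ (-r - 1) * φ ξ ^ (r + 1)) * hB

theorem exists_rpow_mul_add_eq {n a b : ℝ} {φ φ' : ℝ → ℝ} (hn : 1 < n) (ha : 0 ≤ a)
    (hab : a < b) (hcont : ContinuousOn φ (Icc a b)) (hpos : ∀ ξ ∈ Ioo a b, 0 < φ ξ)
    (hφ : ∀ ξ ∈ Ioo a b, HasDerivAt φ (φ' ξ) ξ)
    (hfirst : ∀ ξ ∈ Ioo a b, n * ξ * φ' ξ = n * φ ξ - (n - 1) / n * φ ξ ^ (n / (n - 1))) :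
    ∃ c, ∀ ξ ∈ Icc a b,
      φ ξ ^ (1 / (n - 1)) * (c + ξ ^ (1 / (n - 1))) = n ^ 2 / (n - 1) * ξ ^ (1 / (n - 1)) := by
  obtain ⟨c, hc⟩ := exists_eq_const_of_hasDerivAt_zero fun ξ hξ =>
    hasDerivAt_bernoulliIntegral hn (ha.trans_lt hξ.1) (hpos ξ hξ) (hφ ξ hξ) (hfirst ξ hξ)
  have hr : 0 ≤ 1 / (n - 1) := one_div_nonneg.2 (by linarith)
  refine ⟨c, EqOn.of_subset_closure (fun ξ hξ => ?_) ?_ ?_ Ioo_subset_Icc_self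
    (closure_Ioo hab.ne).ge⟩
  · have hφr : φ ξ ^ (1 / (n - 1)) * φ ξ ^ (-(1 / (n - 1))) = 1 := by
      rw [← Real.rpow_add (hpos ξ hξ)]; simp
    rw [← hc ξ hξ, bernoulliIntegral]
    linear_combination (n ^ 2 / (n - 1) * ξ ^ (1 / (n - 1))) * hφr
  · exact (hcont.rpow_const fun _ _ => Or.inr hr).mul
      (continuousOn_const.add (continuousOn_id.rpow_const fun _ _ => Or.inr hr))
  · exact continuousOn_const.mul (continuousOn_id.rpow_const fun _ _ => Or.inr hr)

theorem eq_zero_of_rpow_mul_add_eq {n a c : ℝ} {φ : ℝ → ℝ} (hn : 1 < n) (ha : 0 ≤ a)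
    (hφa : φ a = 0)
    (hid : φ a ^ (1 / (n - 1)) * (c + a ^ (1 / (n - 1))) = n ^ 2 / (n - 1) * a ^ (1 / (n - 1))) :
    a = 0 := by
  have hr : 1 / (n - 1) ≠ 0 := one_div_ne_zero (by linarith)
  rw [hφa, Real.zero_rpow hr, zero_mul, eq_comm, mul_eq_zero, Real.rpow_eq_zero ha hr] at hid
  exact hid.resolve_left (div_pos (by positivity) (by linarith)).ne'

theorem pos_of_rpow_mul_add_eq {n b c : ℝ} {φ : ℝ → ℝ} (hn : 1 < n) (hb : 0 < b)
    (h0 : Tendsto φ (𝓝[>] 0) (𝓝 0)) (hpos : ∀ ξ ∈ Ioc 0 b, 0 < φ ξ)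
    (hid : ∀ ξ ∈ Ioc 0 b,
      φ ξ ^ (1 / (n - 1)) * (c + ξ ^ (1 / (n - 1))) = n ^ 2 / (n - 1) * ξ ^ (1 / (n - 1))) :
    0 < c := by
  have hr : 0 < 1 / (n - 1) := one_div_pos.2 (by linarith)
  have hB : 0 < n ^ 2 / (n - 1) := div_pos (by positivity) (by linarith)
  have hlim := h0.rpow_const (Or.inr hr.le)
  rw [Real.zero_rpow hr.ne'] at hlim
  obtain ⟨ξ, hξB, hξ⟩ := ((hlim.eventually (gt_mem_nhds hB)).and (Ioc_mem_nhdsGT hb)).exists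
  have hφr : 0 < φ ξ ^ (1 / (n - 1)) := Real.rpow_pos_of_pos (hpos ξ hξ) _
  have hξr : 0 < ξ ^ (1 / (n - 1)) := Real.rpow_pos_of_pos hξ.1 _
  have : 0 < c * φ ξ ^ (1 / (n - 1)) := by nlinarith [hid ξ hξ]
  exact pos_of_mul_pos_left this hφr.le

theorem pow_sub_one_eq_rpow {N : ℕ} (hN : 1 ≤ N) (x : ℝ) : x ^ (N - 1) = x ^ ((N : ℝ) - 1) := by
  rw [← Real.rpow_natCast, Nat.cast_sub hN, Nat.cast_one]

theorem Wprof_eq {N : ℕ} (hN : 2 ≤ N) {lam ξ : ℝ} (hs : 0 ≤ lam ^ N * ξ) :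
    Wprof N lam ξ = ((N : ℝ) ^ 2 / ((N : ℝ) - 1) * (lam ^ N * ξ) ^ (1 / ((N : ℝ) - 1)) /
      (1 + (lam ^ N * ξ) ^ (1 / ((N : ℝ) - 1)))) ^ ((N : ℝ) - 1) := by
  have hN1 : (0 : ℝ) < N - 1 := sub_pos.2 (Nat.one_lt_cast.2 hN)
  set t := (lam ^ N * ξ) ^ (1 / ((N : ℝ) - 1))
  have ht : 0 ≤ t := Real.rpow_nonneg hs _
  have htN : t ^ ((N : ℝ) - 1) = lam ^ N * ξ := by
    rw [← Real.rpow_mul hs, one_div_mul_cancel hN1.ne', Real.rpow_one]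
  calc Wprof N lam ξ
      = ((N : ℝ) ^ 2 / ((N : ℝ) - 1)) ^ ((N : ℝ) - 1) * (lam ^ N * ξ) *
          ((1 + t) ^ ((N : ℝ) - 1))⁻¹ := by
        rw [Wprof, pow_sub_one_eq_rpow (by omega), mul_assoc _ (lam ^ N),
          show (1 : ℝ) - N = -((N : ℝ) - 1) by ring, Real.rpow_neg (by positivity)]
    _ = _ := by
        rw [Real.div_rpow (x := (N : ℝ) ^ 2 / ((N : ℝ) - 1) * t) (by positivity) (by positivity),
          Real.mul_rpow (by positivity) ht, htN, ← div_eq_mul_inv]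

theorem Wprof_lt {N : ℕ} (hN : 2 ≤ N) {lam ξ : ℝ} (hs : 0 ≤ lam ^ N * ξ) :
    Wprof N lam ξ < ((N : ℝ) ^ 2 / ((N : ℝ) - 1)) ^ (N - 1) := by
  have hN1 : (0 : ℝ) < N - 1 := sub_pos.2 (Nat.one_lt_cast.2 hN)
  have ht : 0 ≤ (lam ^ N * ξ) ^ (1 / ((N : ℝ) - 1)) := Real.rpow_nonneg hs _
  rw [Wprof_eq hN hs, pow_sub_one_eq_rpow (by omega)]
  refine Real.rpow_lt_rpow (by positivity) ?_ hN1
  rw [mul_div_assoc]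
  exact mul_lt_of_lt_one_right (by positivity) ((div_lt_one (by positivity)).2 (by linarith))

theorem strictMonoOn_Wprof_one {N : ℕ} (hN : 2 ≤ N) :
    StrictMonoOn (fun lam => Wprof N lam 1) (Ici 0) := by
  have hN1 : (0 : ℝ) < N - 1 := sub_pos.2 (Nat.one_lt_cast.2 hN)
  have hB : 0 < (N : ℝ) ^ 2 / ((N : ℝ) - 1) := by positivity
  have hsub : ∀ t : ℝ, 0 ≤ t →
      (N : ℝ) ^ 2 / ((N : ℝ) - 1) * t / (1 + t) =
        (N : ℝ) ^ 2 / ((N : ℝ) - 1) - (N : ℝ) ^ 2 / ((N : ℝ) - 1) / (1 + t) := by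
    intro t ht
    field_simp
    ring
  intro a (ha : 0 ≤ a) b (hb : 0 ≤ b) hab
  dsimp only
  rw [Wprof_eq hN (by positivity), Wprof_eq hN (by positivity)]
  refine Real.rpow_lt_rpow (by positivity) ?_ hN1
  rw [hsub _ (by positivity), hsub _ (by positivity)]
  gcongr

theorem eq_Wprof_of_rpow_mul_add_eq {N : ℕ} (hN : 2 ≤ N) {c ξ y : ℝ} (hc : 0 < c) (hξ : 0 ≤ ξ)
    (hy : 0 ≤ y) (h : y ^ (1 / ((N : ℝ) - 1)) * (c + ξ ^ (1 / ((N : ℝ) - 1))) =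
      (N : ℝ) ^ 2 / ((N : ℝ) - 1) * ξ ^ (1 / ((N : ℝ) - 1))) :
    y = Wprof N (c ^ (-((N : ℝ) - 1) / N)) ξ := by
  have hN1 : (0 : ℝ) < N - 1 := sub_pos.2 (Nat.one_lt_cast.2 hN)
  set r := 1 / ((N : ℝ) - 1)
  have hlam : (c ^ (-((N : ℝ) - 1) / N)) ^ N = c ^ (-((N : ℝ) - 1)) := by
    rw [← Real.rpow_natCast, ← Real.rpow_mul hc.le]
    congr 1
    field_simp
  have ht : ((c ^ (-((N : ℝ) - 1) / N)) ^ N * ξ) ^ r = ξ ^ r / c := by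
    rw [hlam, Real.mul_rpow (by positivity) hξ, ← Real.rpow_mul hc.le,
      show -((N : ℝ) - 1) * r = -1 by simp only [r]; field_simp, Real.rpow_neg_one]
    ring
  have hyr : y = (y ^ r) ^ ((N : ℝ) - 1) := by
    rw [← Real.rpow_mul hy, one_div_mul_cancel hN1.ne', Real.rpow_one]
  rw [Wprof_eq hN (by positivity), ht, hyr]
  congr 1
  have : 0 < c + ξ ^ r := by positivity
  field_simp at h ⊢
  linear_combination h

/-- **Classification of solutions of the Dirichlet problem.**
If `φ` is nonnegative, continuous on `[0,1]`, `C²` on `(0,1]`, solves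
`N ξ φ″ + φ^{1/(N−1)} φ′ = 0` on `(0,1)` with `φ(0) = 0`, `φ(1) = ℓ > 0`, then
`ℓ < A := (N²/(N−1))^(N−1)`, there is a unique `λ > 0` with `W_λ(1) = ℓ`, and `φ = W_λ`
on `[0,1]`. -/
theorem dirichlet_problem_classification
    (N : ℕ) (hN : 2 ≤ N)
    (A : ℝ) (hA : A = ((N : ℝ) ^ 2 / ((N : ℝ) - 1)) ^ (N - 1))
    (ℓ : ℝ) (hℓ : 0 < ℓ)
    (φ : ℝ → ℝ)
    (hnonneg : ∀ ξ ∈ Icc (0:ℝ) 1, 0 ≤ φ ξ)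
    (hcont : ContinuousOn φ (Icc 0 1))
    (hC2 : ContDiffOn ℝ 2 φ (Ioc 0 1))
    (hODE : ∀ ξ ∈ Ioo (0:ℝ) 1,
      (N : ℝ) * ξ * deriv (deriv φ) ξ + (φ ξ) ^ ((1 : ℝ) / ((N : ℝ) - 1)) * deriv φ ξ = 0)
    (hφ0 : φ 0 = 0) (hφ1 : φ 1 = ℓ) :
    ℓ < A ∧
    ∃ lam : ℝ, 0 < lam ∧ Wprof N lam 1 = ℓ ∧
      (∀ lam' : ℝ, 0 < lam' → Wprof N lam' 1 = ℓ → lam' = lam) ∧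
      ∀ ξ ∈ Icc (0:ℝ) 1, φ ξ = Wprof N lam ξ := by
  have hn : (1 : ℝ) < N := by exact_mod_cast hN
  have hderiv (ξ) (hξ : ξ ∈ Ioo (0 : ℝ) 1) :=
    hasDerivAt_deriv_of_contDiffOn_two isOpen_Ioo (hC2.mono Ioo_subset_Ioc_self) hξ
  have h0 : Tendsto φ (𝓝[>] 0) (𝓝 0) := by
    simpa only [hφ0] using ((hcont 0 (left_mem_Icc.2 zero_le_one)).mono_of_mem_nhdsWithin
      (Icc_mem_nhdsGT zero_lt_one)).tendsto
  have hfirst := mul_deriv_eq_of_ode hn (fun ξ hξ => (hderiv ξ hξ).1)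
    (fun ξ hξ => (hderiv ξ hξ).2) hODE h0
  obtain ⟨x₁, hx₁, hφx₁, hne⟩ := hcont.exists_last_zero zero_le_one hφ0
  have hx₁1 : x₁ < 1 := hx₁.2.lt_of_ne (by rintro rfl; linarith)
  have hpos : ∀ ξ ∈ Ioc x₁ 1, 0 < φ ξ := fun ξ hξ =>
    (hnonneg ξ ⟨hx₁.1.trans hξ.1.le, hξ.2⟩).lt_of_ne' (hne ξ hξ)
  obtain ⟨c, hid⟩ := exists_rpow_mul_add_eq hn hx₁.1 hx₁1
    (hcont.mono (Icc_subset_Icc hx₁.1 le_rfl)) (fun ξ hξ => hpos ξ (Ioo_subset_Ioc_self hξ))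
    (fun ξ hξ => (hderiv ξ ⟨hx₁.1.trans_lt hξ.1, hξ.2⟩).1)
    (fun ξ hξ => hfirst ξ ⟨hx₁.1.trans_lt hξ.1, hξ.2⟩)
  obtain rfl : x₁ = 0 := eq_zero_of_rpow_mul_add_eq hn hx₁.1 hφx₁ (hid x₁ (left_mem_Icc.2 hx₁1.le))
  have hc := pos_of_rpow_mul_add_eq hn one_pos h0 hpos fun ξ hξ => hid ξ (Ioc_subset_Icc_self hξ)
  have hφW : ∀ ξ ∈ Icc (0 : ℝ) 1, φ ξ = Wprof N (c ^ (-((N : ℝ) - 1) / N)) ξ := fun ξ hξ =>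
    eq_Wprof_of_rpow_mul_add_eq hN hc hξ.1 (hnonneg ξ hξ) (hid ξ hξ)
  have hW1 := (hφW 1 (right_mem_Icc.2 zero_le_one)).symm.trans hφ1
  have hlam := Real.rpow_pos_of_pos hc (-((N : ℝ) - 1) / N)
  refine ⟨hA ▸ hW1 ▸ Wprof_lt hN (by positivity), _, hlam, hW1, fun lam' hlam' h' => ?_, hφW⟩
  exact (strictMonoOn_Wprof_one hN).injOn hlam'.le hlam.le (h'.trans hW1.symm)
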